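/- arXiv:1603.05679 — 2 statements merged into one kernel-verified Lean document; each statement's English description precedes it below -/
import Mathlib

section
/- For integers n ≥ 3 and j with 2 ≤ j ≤ n, the quantity C(2n,j) - C(2n,j-2) is strictly greater than 4n. -/
/-!
Write `j = k + 2` and `m = 2n`. Two steps of `C(m, i + 1) (i + 1) = C(m, i) (m - i)` give
`(k + 1)(k + 2) (C(m, k + 2) - C(m, k)) = (m + 1)(m - 2k - 2) C(m, k)`,
and for `k + 2 ≤ m / 2` the factor `(m - 2k - 2) C(m, k)` is at least `2 (k + 1)(k + 2)`
(for `k ≥ 2` because `C(m, k) ≥ C(m, 2)`). Hence the difference is at least `2 (m + 1) = 4n + 2`.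
-/

namespace Nat

theorem choose_le_choose_of_le_of_two_mul_le {m a b : ℕ} (hab : a ≤ b) (hb : 2 * b ≤ m) :
    m.choose a ≤ m.choose b := by
  induction b, hab using Nat.le_induction with
  | base => exact le_rfl
  | succ b _ ih => exact (ih (by omega)).trans (choose_le_succ_of_lt_half_left (by omega))

theorem cast_choose_succ_mul (m k : ℕ) :
    (m.choose (k + 1) : ℤ) * (k + 1) = m.choose k * (m - k) := by
  rcases le_or_gt k m with hk | hk
  · have h := choose_succ_right_eq m k
    zify [hk] at h
    exact h
  · simp [choose_eq_zero_of_lt hk, choose_eq_zero_of_lt (show m < k + 1 by omega)]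

theorem choose_add_two_sub_choose_mul (m k : ℕ) :
    ((k + 1) * (k + 2) : ℤ) * (m.choose (k + 2) - m.choose k)
      = m.choose k * (m + 1) * (m - 2 * k - 2) := by
  have h1 := cast_choose_succ_mul m (k + 1)
  push_cast at h1
  linear_combination ((k : ℤ) + 1) * h1 + ((m : ℤ) - k - 1) * cast_choose_succ_mul m k

theorem two_mul_choose_two (m : ℕ) : 2 * m.choose 2 = m * (m - 1) := by
  rw [choose_two_right]
  exact Nat.mul_div_cancel' (even_mul_pred_self m).two_dvd

theorem two_mul_succ_mul_le_mul_choose {m k : ℕ} (hm : 6 ≤ m) (hk : 2 * k + 4 ≤ m) :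
    2 * ((k + 1) * (k + 2)) ≤ (m - 2 * k - 2) * m.choose k := by
  obtain ⟨d, rfl⟩ : ∃ d, m = 2 * k + 4 + d := ⟨m - (2 * k + 4), by omega⟩
  rw [show 2 * k + 4 + d - 2 * k - 2 = d + 2 by omega]
  match k with
  | 0 => simp only [choose_zero_right]; omega
  | 1 => simp only [choose_one_right]; nlinarith
  | k + 2 =>
    have hmono := choose_le_choose_of_le_of_two_mul_le (m := 2 * (k + 2) + 4 + d)
      (a := 2) (b := k + 2) (by omega) (by omega)
    have htwo := two_mul_choose_two (2 * (k + 2) + 4 + d)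
    rw [show 2 * (k + 2) + 4 + d - 1 = 2 * k + 7 + d by omega] at htwo
    nlinarith

theorem two_mul_succ_le_choose_add_two_sub_choose {m k : ℕ} (hm : 6 ≤ m) (hk : 2 * k + 4 ≤ m) :
    2 * ((m : ℤ) + 1) ≤ m.choose (k + 2) - m.choose k := by
  have hid := choose_add_two_sub_choose_mul m k
  have hbound : 2 * (((k : ℤ) + 1) * (k + 2)) ≤ ((m : ℤ) - 2 * k - 2) * m.choose k := by
    have h := two_mul_succ_mul_le_mul_choose hm hk
    rw [Nat.sub_sub] at h
    zify [show 2 * k + 2 ≤ m by omega] at h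
    linarith
  have hpos : (0 : ℤ) < (k + 1) * (k + 2) := by positivity
  refine le_of_mul_le_mul_left ?_ hpos
  calc ((k : ℤ) + 1) * (k + 2) * (2 * (m + 1))
      = (m + 1) * (2 * ((k + 1) * (k + 2))) := by ring
    _ ≤ (m + 1) * ((m - 2 * k - 2) * m.choose k) := by gcongr
    _ = (k + 1) * (k + 2) * (m.choose (k + 2) - m.choose k) := by rw [hid]; ring

end Nat

/-- For integers `n ≥ 3` and `2 ≤ j ≤ n`, one has `C(2n,j) - C(2n,j-2) > 4n`. -/
theorem stmt3 (n j : ℕ) (hn : 3 ≤ n) (hj : 2 ≤ j) (hjn : j ≤ n) :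
    (4 * n : ℤ) < (Nat.choose (2 * n) j : ℤ) - Nat.choose (2 * n) (j - 2) := by
  obtain ⟨k, rfl⟩ : ∃ k, j = k + 2 := ⟨j - 2, by omega⟩
  have h := Nat.two_mul_succ_le_choose_add_two_sub_choose (m := 2 * n) (k := k)
    (by omega) (by omega)
  rw [Nat.add_sub_cancel]
  push_cast at h
  linarith
end

section
/- Let W₀ ∈ so(2n,2n) commute with every element in the image of the block-diagonal embedding of sp(n,ℝ) into so(2n,2n). Then W₀ has the form [[aI_n, 0, 0, bI_n], [0, aI_n, -bI_n, 0], [0, -cI_n, -aI_n, 0], [cI_n, 0, 0, -aI_n]] for some a, b, c ∈ ℝ. In particular, the centralizer of sp(n,ℝ) in so(2n,2n) is a 3-dimensional Lie algebra isomorphic to sl(2,ℝ) ≅ sp(1,ℝ). -/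
open Matrix

/-- Membership in the Lie algebra `sp(n,ℝ)`. -/
def IsSp (n : ℕ) (M : Matrix (Fin n ⊕ Fin n) (Fin n ⊕ Fin n) ℝ) : Prop :=
  Mᵀ * Matrix.fromBlocks 0 1 (-1) 0 + Matrix.fromBlocks 0 1 (-1) 0 * M = 0

/-- Membership in the Lie algebra `so(2n,2n)`. -/
def IsSo (n : ℕ)
    (M : Matrix ((Fin n ⊕ Fin n) ⊕ (Fin n ⊕ Fin n)) ((Fin n ⊕ Fin n) ⊕ (Fin n ⊕ Fin n)) ℝ) :
    Prop :=
  Mᵀ * Matrix.fromBlocks 0 1 1 0 + Matrix.fromBlocks 0 1 1 0 * M = 0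

/-- The block-diagonal embedding of `sp(n,ℝ)` into `so(2n,2n)`. -/
def phiSp (n : ℕ) (M : Matrix (Fin n ⊕ Fin n) (Fin n ⊕ Fin n) ℝ) :
    Matrix ((Fin n ⊕ Fin n) ⊕ (Fin n ⊕ Fin n)) ((Fin n ⊕ Fin n) ⊕ (Fin n ⊕ Fin n)) ℝ :=
  Matrix.fromBlocks M 0 0
    (Matrix.fromBlocks (-(M.toBlocks₁₁)ᵀ) (-(M.toBlocks₂₁)) (-(M.toBlocks₁₂)) (M.toBlocks₁₁))

/-- The matrix `[[aIₙ,0,0,bIₙ],[0,aIₙ,-bIₙ,0],[0,-cIₙ,-aIₙ,0],[cIₙ,0,0,-aIₙ]]`. -/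
def psiSl2 (n : ℕ) (a b c : ℝ) :
    Matrix ((Fin n ⊕ Fin n) ⊕ (Fin n ⊕ Fin n)) ((Fin n ⊕ Fin n) ⊕ (Fin n ⊕ Fin n)) ℝ :=
  Matrix.fromBlocks (a • (1 : Matrix (Fin n ⊕ Fin n) (Fin n ⊕ Fin n) ℝ))
    (Matrix.fromBlocks 0 (b • (1 : Matrix (Fin n) (Fin n) ℝ))
      (-(b • (1 : Matrix (Fin n) (Fin n) ℝ))) 0)
    (Matrix.fromBlocks 0 (-(c • (1 : Matrix (Fin n) (Fin n) ℝ)))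
      (c • (1 : Matrix (Fin n) (Fin n) ℝ)) 0)
    (-(a • (1 : Matrix (Fin n ⊕ Fin n) (Fin n ⊕ Fin n) ℝ)))

/-!
Write `W₀` in `2n × 2n` blocks. Since `phiSp M = diag(M, -Mᵀ)` on `sp(n,ℝ)`, commuting with the
image of `phiSp` makes the upper-left block commute with `sp(n,ℝ)`, and the off-diagonal blocks
intertwine `M` with `-Mᵀ = J M J⁻¹`, so that their products with `J` commute with `sp(n,ℝ)`.
The commutant of `sp(n,ℝ)` in `gl(2n,ℝ)` is already the scalars, because `sp(n,ℝ)` contains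
`diag(A, -Aᵀ)` for every `A` together with `[[0,1],[0,0]]` and `[[0,0],[1,0]]`. Hence the
diagonal block is `a • 1` and the off-diagonal ones are multiples of `J`, and the `so(2n,2n)`
condition forces the lower-right block to be `-a • 1`.
-/

theorem exists_eq_smul_one_of_commute_fromBlocks {l R : Type*} [Fintype l] [DecidableEq l]
    [Ring R] (X : Matrix (l ⊕ l) (l ⊕ l) R)
    (hdiag : ∀ A : Matrix l l R, Commute (fromBlocks A 0 0 (-Aᵀ)) X)
    (hupper : Commute (fromBlocks 0 1 0 0) X) (hlower : Commute (fromBlocks 0 0 1 0) X) :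
    ∃ a : R, X = a • 1 := by
  obtain ⟨P, Q, S, T, rfl⟩ : ∃ P Q S T, X = fromBlocks P Q S T :=
    ⟨_, _, _, _, (fromBlocks_toBlocks X).symm⟩
  simp only [Commute, SemiconjBy, fromBlocks_multiply, fromBlocks_inj] at hdiag hupper hlower
  simp only [Matrix.zero_mul, Matrix.mul_zero, Matrix.one_mul, Matrix.mul_one, add_zero,
    zero_add] at hdiag hupper hlower
  obtain ⟨hS, hT, -, -⟩ := hupper
  obtain ⟨-, -, -, hQ⟩ := hlower
  subst hS hT hQ
  obtain ⟨a, ha⟩ := mem_range_scalar_of_commute_single (M := T)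
    fun i j _ => (hdiag (single i j 1)).1
  refine ⟨a, ?_⟩
  rw [← ha, scalar_apply, ← smul_one_eq_diagonal, ← fromBlocks_one, fromBlocks_smul]
  simp

section SymplecticOrthogonal

variable {n : ℕ} {M : Matrix (Fin n ⊕ Fin n) (Fin n ⊕ Fin n) ℝ}

theorem isSp_fromBlocks_iff {A B C D : Matrix (Fin n) (Fin n) ℝ} :
    IsSp n (fromBlocks A B C D) ↔ Bᵀ = B ∧ Cᵀ = C ∧ D = -Aᵀ := by
  rw [IsSp, fromBlocks_transpose, fromBlocks_multiply, fromBlocks_multiply, fromBlocks_add,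
    ← fromBlocks_zero, fromBlocks_inj]
  simp only [Matrix.zero_mul, Matrix.mul_zero, Matrix.one_mul, Matrix.mul_one,
    Matrix.neg_mul, Matrix.mul_neg, add_zero, zero_add]
  constructor
  · rintro ⟨hC, hD, -, hB⟩
    exact ⟨by linear_combination (norm := abel) hB, by linear_combination (norm := abel) -hC,
      by linear_combination (norm := abel) hD⟩
  · rintro ⟨hB, hC, rfl⟩
    exact ⟨by rw [hC]; abel, by abel, by simp, by rw [hB]; abel⟩

theorem isSo_fromBlocks_iff {A B C D : Matrix (Fin n ⊕ Fin n) (Fin n ⊕ Fin n) ℝ} :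
    IsSo n (fromBlocks A B C D) ↔ Aᵀ + D = 0 ∧ Bᵀ + B = 0 ∧ Cᵀ + C = 0 := by
  rw [IsSo, fromBlocks_transpose, fromBlocks_multiply, fromBlocks_multiply, fromBlocks_add,
    ← fromBlocks_zero (n := Fin n ⊕ Fin n), fromBlocks_inj]
  simp only [Matrix.zero_mul, Matrix.mul_zero, Matrix.one_mul, Matrix.mul_one,
    add_zero, zero_add]
  constructor
  · rintro ⟨hC, hAD, -, hB⟩
    exact ⟨hAD, hB, hC⟩
  · rintro ⟨hAD, hB, hC⟩
    refine ⟨hC, hAD, ?_, hB⟩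
    simpa [add_comm] using congrArg transpose hAD

local notation "𝕁" => Matrix.J (Fin n) ℝ

theorem isSp_iff_transpose_mul_J : IsSp n M ↔ Mᵀ * 𝕁 = -(𝕁 * M) := by
  have hJ : (fromBlocks 0 1 (-1) 0 : Matrix (Fin n ⊕ Fin n) (Fin n ⊕ Fin n) ℝ) = -𝕁 := by
    simp [J, fromBlocks_neg]
  rw [IsSp, hJ, Matrix.mul_neg, Matrix.neg_mul, neg_add_eq_zero]

theorem IsSp.J_mul_transpose (h : IsSp n M) : 𝕁 * Mᵀ = -(M * 𝕁) := by
  have h' := congrArg (fun X => 𝕁 * X * 𝕁) (isSp_iff_transpose_mul_J.mp h)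
  simp only [Matrix.mul_assoc, J_squared, Matrix.mul_neg, Matrix.neg_mul, Matrix.mul_one] at h'
  simpa [← Matrix.mul_assoc, J_squared, neg_eq_iff_eq_neg] using h'

theorem phiSp_eq_fromBlocks (h : IsSp n M) : phiSp n M = fromBlocks M 0 0 (-Mᵀ) := by
  obtain ⟨A, B, C, D, rfl⟩ : ∃ A B C D, M = fromBlocks A B C D :=
    ⟨_, _, _, _, (fromBlocks_toBlocks M).symm⟩
  obtain ⟨hB, hC, rfl⟩ := isSp_fromBlocks_iff.mp h
  simp [phiSp, fromBlocks_transpose, fromBlocks_neg, hB, hC]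

theorem exists_eq_smul_one_of_forall_isSp_commute
    (X : Matrix (Fin n ⊕ Fin n) (Fin n ⊕ Fin n) ℝ)
    (h : ∀ M, IsSp n M → M * X = X * M) : ∃ a : ℝ, X = a • 1 :=
  exists_eq_smul_one_of_commute_fromBlocks X
    (fun A => h _ (isSp_fromBlocks_iff.mpr ⟨rfl, rfl, rfl⟩))
    (h _ (isSp_fromBlocks_iff.mpr ⟨transpose_one, rfl, by simp⟩))
    (h _ (isSp_fromBlocks_iff.mpr ⟨rfl, transpose_one, by simp⟩))

theorem exists_eq_smul_J_of_forall_isSp_mul_eq_mul_neg_transpose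
    (X : Matrix (Fin n ⊕ Fin n) (Fin n ⊕ Fin n) ℝ)
    (h : ∀ M, IsSp n M → M * X = X * -Mᵀ) : ∃ b : ℝ, X = b • 𝕁 := by
  obtain ⟨a, ha⟩ := exists_eq_smul_one_of_forall_isSp_commute (X * 𝕁) fun M hM => by
    rw [← Matrix.mul_assoc, h M hM, Matrix.mul_assoc, Matrix.neg_mul,
      isSp_iff_transpose_mul_J.mp hM, Matrix.mul_neg, Matrix.mul_neg, neg_neg, Matrix.mul_assoc]
  refine ⟨-a, ?_⟩
  have := congrArg (· * 𝕁) ha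
  simp only [Matrix.mul_assoc, J_squared, Matrix.mul_neg, Matrix.mul_one, Matrix.smul_mul,
    Matrix.one_mul] at this
  rw [← neg_neg X, this, neg_smul]

theorem exists_eq_smul_J_of_forall_isSp_neg_transpose_mul_eq
    (X : Matrix (Fin n ⊕ Fin n) (Fin n ⊕ Fin n) ℝ)
    (h : ∀ M, IsSp n M → -Mᵀ * X = X * M) : ∃ c : ℝ, X = c • 𝕁 := by
  obtain ⟨a, ha⟩ := exists_eq_smul_one_of_forall_isSp_commute (𝕁 * X) fun M hM => by
    rw [Matrix.mul_assoc, ← h M hM, ← Matrix.mul_assoc, ← Matrix.mul_assoc, Matrix.mul_neg,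
      hM.J_mul_transpose, neg_neg]
  refine ⟨-a, ?_⟩
  have := congrArg (𝕁 * ·) ha
  simp only [← Matrix.mul_assoc, J_squared, Matrix.neg_mul, Matrix.one_mul, Matrix.mul_smul,
    Matrix.mul_one] at this
  rw [← neg_neg X, this, neg_smul]

theorem psiSl2_eq_fromBlocks (a b c : ℝ) :
    psiSl2 n a b c = fromBlocks (a • 1) ((-b) • 𝕁) (c • 𝕁) (-(a • 1)) := by
  simp [psiSl2, J, fromBlocks_smul, fromBlocks_neg]

theorem eq_psiSl2_of_isSo_of_commute {W : Matrix ((Fin n ⊕ Fin n) ⊕ (Fin n ⊕ Fin n))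
    ((Fin n ⊕ Fin n) ⊕ (Fin n ⊕ Fin n)) ℝ} (hW : IsSo n W)
    (h : ∀ M, IsSp n M → phiSp n M * W = W * phiSp n M) : ∃ a b c : ℝ, W = psiSl2 n a b c := by
  obtain ⟨P, Q, R, S, rfl⟩ : ∃ P Q R S, W = fromBlocks P Q R S :=
    ⟨_, _, _, _, (fromBlocks_toBlocks W).symm⟩
  have hblocks : ∀ M, IsSp n M → M * P = P * M ∧ M * Q = Q * -Mᵀ ∧ -Mᵀ * R = R * M := by
    intro M hM
    have := h M hM
    simp only [phiSp_eq_fromBlocks hM, fromBlocks_multiply, fromBlocks_inj, Matrix.zero_mul,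
      Matrix.mul_zero, add_zero, zero_add] at this
    exact ⟨this.1, this.2.1, this.2.2.1⟩
  obtain ⟨a, rfl⟩ := exists_eq_smul_one_of_forall_isSp_commute P fun M hM => (hblocks M hM).1
  obtain ⟨b, rfl⟩ := exists_eq_smul_J_of_forall_isSp_mul_eq_mul_neg_transpose Q
    fun M hM => (hblocks M hM).2.1
  obtain ⟨c, rfl⟩ := exists_eq_smul_J_of_forall_isSp_neg_transpose_mul_eq R
    fun M hM => (hblocks M hM).2.2
  obtain ⟨hS, -, -⟩ := isSo_fromBlocks_iff.mp hW
  refine ⟨a, -b, c, ?_⟩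
  rw [psiSl2_eq_fromBlocks, neg_neg, eq_neg_of_add_eq_zero_right hS]
  simp

theorem isSo_psiSl2 (a b c : ℝ) : IsSo n (psiSl2 n a b c) := by
  rw [psiSl2_eq_fromBlocks, isSo_fromBlocks_iff]
  simp

theorem phiSp_mul_psiSl2 (hM : IsSp n M) (a b c : ℝ) :
    phiSp n M * psiSl2 n a b c = psiSl2 n a b c * phiSp n M := by
  rw [phiSp_eq_fromBlocks hM, psiSl2_eq_fromBlocks, fromBlocks_multiply, fromBlocks_multiply]
  simp [isSp_iff_transpose_mul_J.mp hM, hM.J_mul_transpose]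

theorem psiSl2_injective (hn : 0 < n) :
    Function.Injective (fun x : ℝ × ℝ × ℝ => psiSl2 n x.1 x.2.1 x.2.2) := by
  rintro ⟨a, b, c⟩ ⟨a', b', c'⟩ h
  let i : Fin n := ⟨0, hn⟩
  have h_entries := congrArg (fun W => (W (.inl (.inl i)) (.inl (.inl i)),
    W (.inl (.inl i)) (.inr (.inr i)), W (.inr (.inr i)) (.inl (.inl i)))) h
  simpa [psiSl2] using h_entries

theorem psiSl2_lie (a b c a' b' c' : ℝ) :
    psiSl2 n a b c * psiSl2 n a' b' c' - psiSl2 n a' b' c' * psiSl2 n a b c =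
      psiSl2 n (b * c' - c * b') (2 * (a * b' - a' * b)) (2 * (c * a' - c' * a)) := by
  simp only [psiSl2_eq_fromBlocks, fromBlocks_multiply, sub_eq_add_neg, fromBlocks_neg,
    fromBlocks_add, fromBlocks_inj, Matrix.smul_mul, Matrix.mul_smul, Matrix.mul_one,
    Matrix.one_mul, Matrix.neg_mul, Matrix.mul_neg, smul_smul, J_squared]
  refine ⟨?_, ?_, ?_, ?_⟩ <;> module

end SymplecticOrthogonal

/-- The last two conjuncts say that `[[a, b], [c, -a]] ↦ psiSl2 n a b c` is an injective Lie
algebra homomorphism `sl(2,ℝ) → so(2n,2n)`. -/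
theorem stmt13 (n : ℕ) (hn : 3 ≤ n) :
    (∀ W₀, IsSo n W₀ → (∀ M, IsSp n M → phiSp n M * W₀ = W₀ * phiSp n M) →
      ∃ a b c : ℝ, W₀ = psiSl2 n a b c) ∧
    (∀ a b c : ℝ, IsSo n (psiSl2 n a b c) ∧
      ∀ M, IsSp n M → phiSp n M * psiSl2 n a b c = psiSl2 n a b c * phiSp n M) ∧
    Function.Injective (fun x : ℝ × ℝ × ℝ => psiSl2 n x.1 x.2.1 x.2.2) ∧
    (∀ a b c a' b' c' : ℝ,
      psiSl2 n a b c * psiSl2 n a' b' c' - psiSl2 n a' b' c' * psiSl2 n a b c =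
        psiSl2 n (b * c' - c * b') (2 * (a * b' - a' * b)) (2 * (c * a' - c' * a))) := by
  exact ⟨fun _ => eq_psiSl2_of_isSo_of_commute,
    fun a b c => ⟨isSo_psiSl2 a b c, fun _ hM => phiSp_mul_psiSl2 hM a b c⟩,
    psiSl2_injective (by omega), psiSl2_lie⟩
end
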